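/- On a spatially flat FRW spacetime the scalar curvature satisfies R = −6(Ḣ + 2H²) with H = ȧ/a. The scale factors a(t) = β₂ e^{± m t/√2}, a(t) = β₂ √(cosh(±√2 m t + β₁)), and a(t) = β₂ √(sinh(±√2 m t + β₁)) (on intervals where the argument of sinh is positive) all have constant scalar curvature R = −6m² for m > 0, and for m = 0 the scale factors a(t) = β₂√(±t + β₁) and a(t) = β₂ have R = 0. -/

import Mathlib

/-- The scalar curvature of a spatially flat FRW spacetime with scale factor `a`:
`R = -6 (Ḣ + 2H²)` with `H = ȧ/a`. -/
noncomputable def scalarCurv (a : ℝ → ℝ) (t : ℝ) : ℝ :=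
  -6 * (deriv (fun s => deriv a s / a s) t + 2 * (deriv a t / a t) ^ 2)

/-!
Writing `a = c √g`, the Hubble function is `H = g'/(2g)`, and then `Ḣ + 2H² = g''/(2g)`, so
`R = -3 g''/g`. For `g = F(k t + β₁)` with `F'' = F` (`F = cosh`, `sinh`) this is `-3k² = -6m²`
since `k = ±√2 m`; for affine `g` it is `0`. The exponential case has constant `H = ±m/√2`.
-/

open Filter Topology

theorem scalarCurv_eq_of_hubble {a H : ℝ → ℝ} {t H' : ℝ}
    (hH : (fun u => deriv a u / a u) =ᶠ[𝓝 t] H) (hH' : HasDerivAt H H' t) :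
    scalarCurv a t = -6 * (H' + 2 * H t ^ 2) := by
  rw [scalarCurv, hH.deriv_eq, hH'.deriv, hH.eq_of_nhds]

theorem scalarCurv_const (c t : ℝ) : scalarCurv (fun _ => c) t = 0 := by
  simp [scalarCurv]

theorem scalarCurv_const_mul_exp_mul {c : ℝ} (hc : c ≠ 0) (l t : ℝ) :
    scalarCurv (fun u => c * Real.exp (l * u)) t = -12 * l ^ 2 := by
  have hubble : (fun u => deriv (fun v => c * Real.exp (l * v)) u / (c * Real.exp (l * u)))
      =ᶠ[𝓝 t] fun _ => l := by
    refine Eventually.of_forall fun u => ?_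
    have hd := (((hasDerivAt_id u).const_mul l).exp).const_mul c
    simp only [id, mul_one] at hd
    beta_reduce
    rw [hd.deriv]
    field_simp
  rw [scalarCurv_eq_of_hubble hubble (hasDerivAt_const t l)]
  ring

theorem hubble_const_mul_sqrt {c : ℝ} (hc : c ≠ 0) {g : ℝ → ℝ} {g' u : ℝ}
    (hg : HasDerivAt g g' u) (hpos : 0 < g u) :
    deriv (fun v => c * Real.sqrt (g v)) u / (c * Real.sqrt (g u)) = g' / (2 * g u) := by
  rw [((hg.sqrt hpos.ne').const_mul c).deriv]
  have : Real.sqrt (g u) ≠ 0 := by positivity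
  field_simp
  rw [Real.sq_sqrt hpos.le]

theorem scalarCurv_const_mul_sqrt {c : ℝ} (hc : c ≠ 0) {g g' : ℝ → ℝ} {g'' t : ℝ}
    (hg : ∀ᶠ u in 𝓝 t, 0 < g u ∧ HasDerivAt g (g' u) u) (hg' : HasDerivAt g' g'' t) :
    scalarCurv (fun u => c * Real.sqrt (g u)) t = -3 * g'' / g t := by
  have hubble : (fun u => deriv (fun v => c * Real.sqrt (g v)) u / (c * Real.sqrt (g u)))
      =ᶠ[𝓝 t] fun u => g' u / (2 * g u) := by
    filter_upwards [hg] with u hu using hubble_const_mul_sqrt hc hu.2 hu.1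
  obtain ⟨hpos, hderiv⟩ := hg.self_of_nhds
  rw [scalarCurv_eq_of_hubble hubble (hg'.div (hderiv.const_mul 2) (by positivity))]
  field_simp
  ring

theorem scalarCurv_const_mul_sqrt_comp_mul_add {c : ℝ} (hc : c ≠ 0) {F F' : ℝ → ℝ}
    (hF : ∀ x, HasDerivAt F (F' x) x) (hF' : ∀ x, HasDerivAt F' (F x) x) {k b t : ℝ}
    (hpos : ∀ᶠ u in 𝓝 t, 0 < F (k * u + b)) :
    scalarCurv (fun u => c * Real.sqrt (F (k * u + b))) t = -3 * k ^ 2 := by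
  have hinner (u : ℝ) : HasDerivAt (fun v => k * v + b) k u := by
    simpa using ((hasDerivAt_id u).const_mul k).add_const b
  have hg : ∀ᶠ u in 𝓝 t, 0 < F (k * u + b) ∧
      HasDerivAt (fun v => F (k * v + b)) (F' (k * u + b) * k) u := by
    filter_upwards [hpos] with u hu using ⟨hu, (hF _).comp u (hinner u)⟩
  rw [scalarCurv_const_mul_sqrt hc hg (((hF' _).comp t (hinner t)).mul_const k)]
  have : F (k * t + b) ≠ 0 := hpos.self_of_nhds.ne'
  field_simp

theorem stmt_13_general (m β₁ β₂ : ℝ) (hβ₂ : 0 < β₂) (s : ℝ) (hs : s = 1 ∨ s = -1) :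
    (∀ t, scalarCurv (fun u => β₂ * Real.exp (s * m * u / Real.sqrt 2)) t = -6 * m ^ 2) ∧
    (∀ t, scalarCurv
        (fun u => β₂ * Real.sqrt (Real.cosh (s * Real.sqrt 2 * m * u + β₁))) t = -6 * m ^ 2) ∧
    (∀ t, 0 < Real.sinh (s * Real.sqrt 2 * m * t + β₁) →
      scalarCurv
        (fun u => β₂ * Real.sqrt (Real.sinh (s * Real.sqrt 2 * m * u + β₁))) t = -6 * m ^ 2) ∧
    (∀ t, 0 < s * t + β₁ →
      scalarCurv (fun u => β₂ * Real.sqrt (s * u + β₁)) t = 0) ∧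
    (∀ t, scalarCurv (fun _ => β₂) t = 0) := by
  have hs2 : s ^ 2 = 1 := by rcases hs with rfl | rfl <;> norm_num
  have hsqrt2 : Real.sqrt 2 ^ 2 = 2 := Real.sq_sqrt zero_le_two
  have hk : (s * Real.sqrt 2 * m) ^ 2 = 2 * m ^ 2 := by rw [mul_pow, mul_pow, hs2, hsqrt2]; ring
  refine ⟨fun t => ?_, fun t => ?_, fun t ht => ?_, fun t ht => ?_, scalarCurv_const β₂⟩
  · simp only [mul_div_right_comm (s * m) _ (Real.sqrt 2)]
    rw [scalarCurv_const_mul_exp_mul hβ₂.ne', div_pow, mul_pow, hs2, hsqrt2]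
    ring
  · rw [scalarCurv_const_mul_sqrt_comp_mul_add hβ₂.ne' Real.hasDerivAt_cosh Real.hasDerivAt_sinh
      (Eventually.of_forall fun _ => Real.cosh_pos _), hk]
    ring
  · have hpos : ∀ᶠ u in 𝓝 t, 0 < Real.sinh (s * Real.sqrt 2 * m * u + β₁) :=
      (by fun_prop : Continuous fun u => Real.sinh (s * Real.sqrt 2 * m * u + β₁)).continuousAt
        |>.eventually (eventually_gt_nhds ht)
    rw [scalarCurv_const_mul_sqrt_comp_mul_add hβ₂.ne' Real.hasDerivAt_sinh Real.hasDerivAt_cosh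
      hpos, hk]
    ring
  · have hg : ∀ᶠ u in 𝓝 t, 0 < s * u + β₁ ∧ HasDerivAt (fun v => s * v + β₁) s u := by
      filter_upwards [(by fun_prop : Continuous fun u => s * u + β₁).continuousAt.eventually
        (eventually_gt_nhds ht)] with u hu
      exact ⟨hu, by simpa using ((hasDerivAt_id u).const_mul s).add_const β₁⟩
    rw [scalarCurv_const_mul_sqrt hβ₂.ne' (g' := fun _ => s) hg (hasDerivAt_const t s)]
    ring

/-- the scale factors `β₂ e^{± m t/√2}`, `β₂ √cosh(±√2 m t + β₁)` and
`β₂ √sinh(±√2 m t + β₁)` (where `sinh > 0`) have constant scalar curvature `R = -6m²`,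
while `β₂ √(±t + β₁)` (where `±t + β₁ > 0`) and the constant scale factor `β₂` have `R = 0`. -/
theorem stmt_13 (m β₁ β₂ : ℝ) (hm : 0 < m) (hβ₂ : 0 < β₂) (s : ℝ) (hs : s = 1 ∨ s = -1) :
    (∀ t, scalarCurv (fun u => β₂ * Real.exp (s * m * u / Real.sqrt 2)) t = -6 * m ^ 2) ∧
    (∀ t, scalarCurv
        (fun u => β₂ * Real.sqrt (Real.cosh (s * Real.sqrt 2 * m * u + β₁))) t = -6 * m ^ 2) ∧
    (∀ t, 0 < Real.sinh (s * Real.sqrt 2 * m * t + β₁) →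
      scalarCurv
        (fun u => β₂ * Real.sqrt (Real.sinh (s * Real.sqrt 2 * m * u + β₁))) t = -6 * m ^ 2) ∧
    (∀ t, 0 < s * t + β₁ →
      scalarCurv (fun u => β₂ * Real.sqrt (s * u + β₁)) t = 0) ∧
    (∀ t, scalarCurv (fun _ => β₂) t = 0) :=
  stmt_13_general m β₁ β₂ hβ₂ s hs
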